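/- Let h: [0,1]ⁿ → ℝ be twice continuously differentiable with ‖h‖_∞ ≤ α, ‖∂h/∂xᵢ‖_∞ ≤ βᵢ, ‖∂²h/∂xᵢ²‖_∞ ≤ γᵢᵢ. Fix y ∈ [0,1]ⁿ, t ∈ [0,1], and let Y have independent Bernoulli(yᵢ) components. With uᵢ(t,x) = (∂h/∂xᵢ)(tx + (1-t)y), U = h(Y) - h(y), and Y⁽ⁱ⁾ the vector Y with its i-th coordinate replaced by 0, one has E[(Yᵢ - yᵢ)·uᵢ(t, Y⁽ⁱ⁾)·(h(Y⁽ⁱ⁾)-h(y))] = 0 and |E[(Yᵢ - yᵢ)·uᵢ(t,Y)·U]| ≤ 2αtγᵢᵢ + βᵢ². -/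

import Mathlib

/-- The point of `{0,1}ⁿ ⊆ ℝⁿ` corresponding to a Boolean vector. -/
def boolToReal {n : ℕ} (x : Fin n → Bool) : Fin n → ℝ := fun i => if x i then 1 else 0

/-- Probability of the outcome `x` under a product of independent `Bernoulli(yᵢ)`. -/
def bernWeight {n : ℕ} (y : Fin n → ℝ) (x : Fin n → Bool) : ℝ :=
  ∏ i, if x i then y i else 1 - y i

/-!
Flipping the `i`-th coordinate of the Boolean outcome pairs outcomes whose weights, multiplied by
the centered factor `Yᵢ - yᵢ`, cancel (`yᵢ (1 - yᵢ) - (1 - yᵢ) yᵢ = 0`), while anything computed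
from `Y⁽ⁱ⁾` is unchanged by the flip; this is the first identity. For the bound, subtract it:
`uᵢ(t,Y) U - uᵢ(t,Y⁽ⁱ⁾) U⁽ⁱ⁾ = (uᵢ(t,Y) - uᵢ(t,Y⁽ⁱ⁾)) U + uᵢ(t,Y⁽ⁱ⁾) (U - U⁽ⁱ⁾)`, and bound each
difference by the mean value theorem along the `i`-th coordinate direction, in which `Y` and
`Y⁽ⁱ⁾` (hence also the two points where `uᵢ(t, ·)` evaluates `∂ᵢh`) differ.
-/

open Finset Function

theorem abs_mul_sub_mul_le (a b c d : ℝ) : |a * b - c * d| ≤ |a - c| * |b| + |c| * |b - d| := by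
  rw [← abs_mul, ← abs_mul, show a * b - c * d = (a - c) * b + c * (b - d) by ring]
  exact abs_add_le _ _

theorem abs_sub_le_of_abs_fderiv_apply_le {E : Type*} [NormedAddCommGroup E] [NormedSpace ℝ E]
    {g : E → ℝ} {s : Set E} (hs : Convex ℝ s) (hg : ∀ z ∈ s, DifferentiableAt ℝ g z)
    {w : E} {B : ℝ} (hB : ∀ z ∈ s, |fderiv ℝ g z w| ≤ B) {a b : E} (ha : a ∈ s) (hb : b ∈ s)
    {c : ℝ} (hab : b - a = c • w) : |g b - g a| ≤ B * |c| := by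
  have hseg : ∀ τ ∈ Set.Icc (0 : ℝ) 1, a + τ • (b - a) ∈ s := fun τ hτ =>
    hs.add_smul_sub_mem ha hb hτ
  have hderiv : ∀ τ ∈ Set.Icc (0 : ℝ) 1, HasDerivWithinAt (fun τ : ℝ => g (a + τ • (b - a)))
      (c * fderiv ℝ g (a + τ • (b - a)) w) (Set.Icc 0 1) τ := by
    intro τ hτ
    have := (hg _ (hseg τ hτ)).hasFDerivAt.comp_hasDerivAt τ
      (((hasDerivAt_id τ).smul_const (b - a)).const_add a)
    rw [hab] at this ⊢
    simpa [comp_def] using this.hasDerivWithinAt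
  have hbound : ∀ τ ∈ Set.Ico (0 : ℝ) 1, ‖c * fderiv ℝ g (a + τ • (b - a)) w‖ ≤ B * |c| :=
    fun τ hτ => by
      rw [Real.norm_eq_abs, abs_mul, mul_comm]
      exact mul_le_mul_of_nonneg_right (hB _ (hseg τ (Set.Ico_subset_Icc_self hτ))) (abs_nonneg c)
  simpa using norm_image_sub_le_of_norm_deriv_le_segment' hderiv hbound 1 (by simp)

theorem sub_update_zero {ι R : Type*} [DecidableEq ι] [Ring R] (X : ι → R) (i : ι) :
    X - update X i 0 = X i • Pi.single i 1 := by
  ext j; by_cases hj : j = i <;> simp [hj]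

theorem update_zero_mem_Icc {ι : Type*} [DecidableEq ι] {X : ι → ℝ} (hX : X ∈ Set.Icc 0 1)
    (i : ι) : update X i 0 ∈ Set.Icc 0 1 := by
  rw [← Set.pi_univ_Icc] at hX ⊢
  exact (Set.update_mem_pi_iff_of_mem hX).2 fun _ => by simp

theorem boolToReal_mem_Icc {n : ℕ} (x : Fin n → Bool) : boolToReal x ∈ Set.Icc 0 1 :=
  ⟨fun j => by unfold boolToReal; split <;> norm_num,
    fun j => by unfold boolToReal; split <;> norm_num⟩

theorem bernWeight_nonneg {n : ℕ} {y : Fin n → ℝ} (hy : y ∈ Set.Icc 0 1) (x : Fin n → Bool) :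
    0 ≤ bernWeight y x :=
  prod_nonneg fun j _ => by split <;> linarith [show 0 ≤ y j from hy.1 j, show y j ≤ 1 from hy.2 j]

theorem sum_bernWeight {n : ℕ} (y : Fin n → ℝ) : ∑ x, bernWeight y x = 1 := by
  simp only [bernWeight]
  rw [← Fintype.prod_sum (fun i (b : Bool) => if b then y i else 1 - y i)]
  simp

theorem abs_sum_bernWeight_mul_le {n : ℕ} {y : Fin n → ℝ} (hy : y ∈ Set.Icc 0 1)
    {f : (Fin n → Bool) → ℝ} {K : ℝ} (hf : ∀ x, |f x| ≤ K) :
    |∑ x, bernWeight y x * f x| ≤ K := calc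
  _ ≤ ∑ x, bernWeight y x * K := by
      refine (abs_sum_le_sum_abs _ _).trans (sum_le_sum fun x _ => ?_)
      rw [abs_mul, abs_of_nonneg (bernWeight_nonneg hy x)]
      exact mul_le_mul_of_nonneg_left (hf x) (bernWeight_nonneg hy x)
  _ = K := by rw [← sum_mul, sum_bernWeight, one_mul]

theorem bernWeight_eq_mul_prod_erase {n : ℕ} (y : Fin n → ℝ) (x : Fin n → Bool) (i : Fin n) :
    bernWeight y x =
      (if x i then y i else 1 - y i) * ∏ j ∈ univ.erase i, (if x j then y j else 1 - y j) :=
  (mul_prod_erase _ _ (mem_univ i)).symm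

theorem bernWeight_mul_centered_add_flip {n : ℕ} (y : Fin n → ℝ) (x : Fin n → Bool) (i : Fin n) :
    bernWeight y x * (boolToReal x i - y i) +
      bernWeight y (update x i (!x i)) * (boolToReal (update x i (!x i)) i - y i) = 0 := by
  have hrest : ∏ j ∈ univ.erase i, (if update x i (!x i) j then y j else 1 - y j) =
      ∏ j ∈ univ.erase i, (if x j then y j else 1 - y j) :=
    prod_congr rfl fun j hj => by rw [update_of_ne (ne_of_mem_erase hj)]
  rw [bernWeight_eq_mul_prod_erase y x i, bernWeight_eq_mul_prod_erase y _ i, hrest]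
  cases hxi : x i <;> simp [boolToReal, hxi] <;> ring

theorem sum_bernWeight_mul_centered_update_eq_zero {n : ℕ} (y : Fin n → ℝ) (i : Fin n)
    (F : (Fin n → ℝ) → ℝ) :
    ∑ x, bernWeight y x * ((boolToReal x i - y i) * F (update (boolToReal x) i 0)) = 0 := by
  refine sum_ninvolution (fun x => update x i (!x i)) (fun x => ?_) (fun x _ hx => ?_)
    (fun _ => mem_univ _) (fun x => by simp)
  · have hF : update (boolToReal (update x i (!x i))) i 0 = update (boolToReal x) i 0 := by
      ext j; by_cases hj : j = i <;> simp [boolToReal, hj]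
    rw [hF, ← mul_assoc, ← mul_assoc, ← add_mul, bernWeight_mul_centered_add_flip, zero_mul]
  · simpa using congr_fun hx i

theorem abs_centered_mul_sub_update_zero_le {n : ℕ} {h : (Fin n → ℝ) → ℝ} (hh : ContDiff ℝ 2 h)
    {α β γ : ℝ} {i : Fin n}
    (hα : ∀ x ∈ Set.Icc (0 : Fin n → ℝ) 1, |h x| ≤ α)
    (hβ : ∀ x ∈ Set.Icc (0 : Fin n → ℝ) 1, |fderiv ℝ h x (Pi.single i 1)| ≤ β)
    (hγ : ∀ x ∈ Set.Icc (0 : Fin n → ℝ) 1,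
      |fderiv ℝ (fun z => fderiv ℝ h z (Pi.single i 1)) x (Pi.single i 1)| ≤ γ)
    {y : Fin n → ℝ} (hy : y ∈ Set.Icc 0 1) {t : ℝ} (ht : t ∈ Set.Icc (0 : ℝ) 1)
    {X : Fin n → ℝ} (hX : X ∈ Set.Icc 0 1) :
    |(X i - y i) * (fderiv ℝ h (t • X + (1 - t) • y) (Pi.single i 1) * (h X - h y) -
      fderiv ℝ h (t • update X i 0 + (1 - t) • y) (Pi.single i 1) * (h (update X i 0) - h y))| ≤
      2 * α * t * γ + β ^ 2 := by
  have hX' : update X i 0 ∈ Set.Icc 0 1 := update_zero_mem_Icc hX i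
  have hmix : ∀ z ∈ Set.Icc (0 : Fin n → ℝ) 1, t • z + (1 - t) • y ∈ Set.Icc 0 1 := fun z hz =>
    convex_Icc 0 1 hz hy ht.1 (sub_nonneg.2 ht.2) (add_sub_cancel _ _)
  have hXi_nonneg : 0 ≤ X i := hX.1 i
  have hXi_le_one : X i ≤ 1 := hX.2 i
  have hβ0 : 0 ≤ β := (abs_nonneg _).trans (hβ y hy)
  have hγ0 : 0 ≤ γ := (abs_nonneg _).trans (hγ y hy)
  have hdiff : Differentiable ℝ h := hh.differentiable (by norm_num)
  have hdiff_partial : Differentiable ℝ fun z => fderiv ℝ h z (Pi.single i 1) :=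
    ((hh.fderiv_right le_rfl).clm_apply contDiff_const).differentiable one_ne_zero
  have hpartial_sub : |fderiv ℝ h (t • X + (1 - t) • y) (Pi.single i 1) -
      fderiv ℝ h (t • update X i 0 + (1 - t) • y) (Pi.single i 1)| ≤ γ * t := by
    refine (abs_sub_le_of_abs_fderiv_apply_le (convex_Icc 0 1) (fun z _ => hdiff_partial z) hγ
      (hmix _ hX') (hmix X hX) (c := t * X i) ?_).trans ?_
    · rw [add_sub_add_right_eq_sub, ← smul_sub, sub_update_zero, smul_smul]
    · rw [abs_of_nonneg (mul_nonneg ht.1 hXi_nonneg)]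
      exact mul_le_mul_of_nonneg_left (mul_le_of_le_one_right ht.1 hXi_le_one) hγ0
  have hh_sub : |h X - h (update X i 0)| ≤ β := by
    refine (abs_sub_le_of_abs_fderiv_apply_le (convex_Icc 0 1) (fun z _ => hdiff z) hβ hX' hX
      (sub_update_zero X i)).trans ?_
    rw [abs_of_nonneg hXi_nonneg]
    exact mul_le_of_le_one_right hβ0 hXi_le_one
  have hU : |h X - h y| ≤ 2 * α := by linarith [abs_sub (h X) (h y), hα X hX, hα y hy]
  have hcentered : |X i - y i| ≤ 1 := abs_sub_le_iff.2
    ⟨by linarith [show 0 ≤ y i from hy.1 i], by linarith [show y i ≤ 1 from hy.2 i]⟩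
  rw [abs_mul]
  refine (mul_le_of_le_one_left (abs_nonneg _) hcentered).trans <|
    (abs_mul_sub_mul_le _ _ _ _).trans ?_
  rw [sub_sub_sub_cancel_right]
  calc _ ≤ γ * t * (2 * α) + β * β :=
        add_le_add (mul_le_mul hpartial_sub hU (abs_nonneg _) (mul_nonneg hγ0 ht.1))
          (mul_le_mul (hβ _ (hmix _ hX')) hh_sub (abs_nonneg _) hβ0)
    _ = 2 * α * t * γ + β ^ 2 := by ring

theorem leave_one_out_decoupling (n : ℕ) (h : (Fin n → ℝ) → ℝ) (hh : ContDiff ℝ 2 h)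
    (α : ℝ) (β γ : Fin n → ℝ)
    (hα : ∀ x ∈ Set.Icc (0 : Fin n → ℝ) 1, |h x| ≤ α)
    (hβ : ∀ x ∈ Set.Icc (0 : Fin n → ℝ) 1, ∀ i, |fderiv ℝ h x (Pi.single i 1)| ≤ β i)
    (hγ : ∀ x ∈ Set.Icc (0 : Fin n → ℝ) 1, ∀ i,
      |fderiv ℝ (fun z => fderiv ℝ h z (Pi.single i 1)) x (Pi.single i 1)| ≤ γ i)
    (y : Fin n → ℝ) (hy : y ∈ Set.Icc (0 : Fin n → ℝ) 1)
    (t : ℝ) (ht : t ∈ Set.Icc (0 : ℝ) 1)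
    (u : ℝ → (Fin n → ℝ) → Fin n → ℝ)
    (hu : ∀ s x i, u s x i = fderiv ℝ h (s • x + (1 - s) • y) (Pi.single i 1))
    (i : Fin n) :
    (∑ x : Fin n → Bool, bernWeight y x *
        ((boolToReal x i - y i) * u t (Function.update (boolToReal x) i 0) i *
          (h (Function.update (boolToReal x) i 0) - h y)) = 0) ∧
    (|∑ x : Fin n → Bool, bernWeight y x *
        ((boolToReal x i - y i) * u t (boolToReal x) i * (h (boolToReal x) - h y))| ≤
      2 * α * t * γ i + (β i)^2) := by
  have decoupled : ∑ x : Fin n → Bool, bernWeight y x *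
      ((boolToReal x i - y i) * u t (update (boolToReal x) i 0) i *
        (h (update (boolToReal x) i 0) - h y)) = 0 := by
    simpa only [mul_assoc] using
      sum_bernWeight_mul_centered_update_eq_zero y i fun z => u t z i * (h z - h y)
  refine ⟨decoupled, ?_⟩
  rw [← sub_zero (∑ x : Fin n → Bool, _), ← decoupled, ← sum_sub_distrib]
  simp_rw [← mul_sub, mul_assoc (boolToReal _ i - y i), ← mul_sub, hu]
  exact abs_sum_bernWeight_mul_le hy fun x =>
    abs_centered_mul_sub_update_zero_le hh hα (fun x hx => hβ x hx i) (fun x hx => hγ x hx i)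
      hy ht (boolToReal_mem_Icc x)
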